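/- arXiv:1604.08052 — 2 statements merged into one kernel-verified Lean document; each statement's English description precedes it below -/
import Mathlib

section
/- Define G(z) = √2/√(1 - z² + √(1-z²)) and F_1(z) = (1 + √(1-z²) - √2·√(1 - z² + √(1-z²)))/z for 0 < z < 1. Then as z → 1⁻, G(z)·(1 + F_1(z))/(1 - F_1(z)) is asymptotically equivalent to √2/√(1-z), i.e., the ratio of the two expressions tends to 1. -/
/-- `G(z) = √2/√(1 - z² + √(1-z²))` from the Green function of the comb walk. -/
noncomputable def Gfun (z : ℝ) : ℝ :=
  Real.sqrt 2 / Real.sqrt (1 - z ^ 2 + Real.sqrt (1 - z ^ 2))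

/-- `F₁(z) = (1 + √(1-z²) - √2·√(1 - z² + √(1-z²)))/z`. -/
noncomputable def F1 (z : ℝ) : ℝ :=
  (1 + Real.sqrt (1 - z ^ 2) - Real.sqrt 2 * Real.sqrt (1 - z ^ 2 + Real.sqrt (1 - z ^ 2))) / z

/-!
Write `s = √(1-z²)`, `t = √(1-z²+s)` and `a = 1 - z + s`. Then `1 - F₁ = (√2 t - a)/z`, and
multiplying by the conjugate `√2 t + a` gives `2t² - a² = 2za`. The only quotient that
degenerates as `z → 1` is `a / t`, and `2t² = a(z + 1 + s)` turns it into
`√2 · √(a/(z + 1 + s))`, which tends to `0`. Finally `a = √(1-z)(√(1-z) + √(1+z))`, so after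
dividing by `√2/√(1-z)` the ratio becomes a function continuous at `z = 1`, with value `1`.
-/

open Filter Real Topology

lemma one_sub_add_sqrt_one_sub_sq {z : ℝ} (h : z ≤ 1) :
    1 - z + √(1 - z ^ 2) = √(1 - z) * (√(1 - z) + √(1 + z)) := by
  rw [mul_add, mul_self_sqrt (by linarith), ← sqrt_mul (by linarith)]
  ring_nf

lemma Gfun_mul_one_add_F1_div_one_sub_F1 {z : ℝ} (h₀ : 0 < z) (h₁ : z < 1) :
    Gfun z * (1 + F1 z) / (1 - F1 z) =
      (z + 1 + √(1 - z ^ 2) - √2 * √(1 - z ^ 2 + √(1 - z ^ 2))) / z *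
        (1 + √((1 - z + √(1 - z ^ 2)) / (z + 1 + √(1 - z ^ 2)))) / (1 - z + √(1 - z ^ 2)) := by
  unfold Gfun F1
  have hz2 : 0 < 1 - z ^ 2 := by nlinarith
  set s := √(1 - z ^ 2)
  have hs : 0 < s := sqrt_pos.2 hz2
  have hs2 : s ^ 2 = 1 - z ^ 2 := sq_sqrt hz2.le
  set a := 1 - z + s
  have ha : 0 < a := by positivity
  set t := √(1 - z ^ 2 + s)
  have ht : 0 < t := sqrt_pos.2 (by positivity)
  have ht2 : t ^ 2 = 1 - z ^ 2 + s := sq_sqrt (by positivity)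
  set r := √(a / (z + 1 + s))
  have hr2 : r ^ 2 = a / (z + 1 + s) := sq_sqrt (by positivity)
  set w := √2
  have hw : 0 < w := by positivity
  have hw2 : w ^ 2 = 2 := sq_sqrt zero_le_two
  have ha_eq : a = w * r * t := by
    refine (pow_left_inj₀ ha.le (by positivity) two_ne_zero).1 ?_
    rw [mul_pow, mul_pow, hw2, hr2, ht2]
    field_simp
    linear_combination hs2
  have hr1 : t ^ 2 * (1 - r ^ 2) = z * a := by
    rw [hr2, ht2]
    field_simp
    linear_combination (-z) * hs2
  have hr_lt : r < 1 := by
    have : 0 < 1 - r ^ 2 := pos_of_mul_pos_right (hr1 ▸ mul_pos h₀ ha) (sq_nonneg t)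
    nlinarith [sqrt_nonneg (a / (z + 1 + s))]
  have hD : 0 < w * t - a := by
    rw [ha_eq]
    nlinarith [mul_pos hw ht]
  have hden : 1 - (1 + s - w * t) / z = (w * t - a) / z := by
    field_simp
    ring
  rw [hden]
  field_simp
  linear_combination (-w * (z + 1 + s - w * t)) * hr1 + (t * (z + 1 + s - w * t) * (1 + r)) * ha_eq

noncomputable def combRatio (z : ℝ) : ℝ :=
  (z + 1 + √(1 - z ^ 2) - √2 * √(1 - z ^ 2 + √(1 - z ^ 2))) / z *
    (1 + √((1 - z + √(1 - z ^ 2)) / (z + 1 + √(1 - z ^ 2)))) / (√2 * (√(1 - z) + √(1 + z)))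

lemma div_eq_combRatio {z : ℝ} (h₀ : 0 < z) (h₁ : z < 1) :
    Gfun z * (1 + F1 z) / (1 - F1 z) / (√2 / √(1 - z)) = combRatio z := by
  have hu : 0 < √(1 - z) := sqrt_pos.2 (by linarith)
  have hv : 0 < √(1 + z) := sqrt_pos.2 (by linarith)
  rw [Gfun_mul_one_add_F1_div_one_sub_F1 h₀ h₁, combRatio]
  generalize √((1 - z + √(1 - z ^ 2)) / (z + 1 + √(1 - z ^ 2))) = r
  rw [one_sub_add_sqrt_one_sub_sq h₁.le]
  field_simp

lemma continuousAt_combRatio : ContinuousAt combRatio 1 := by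
  unfold combRatio
  fun_prop (disch := norm_num)

lemma combRatio_one : combRatio 1 = 1 := by
  norm_num [combRatio]

/-- As `z → 1⁻`, `G(z)(1+F₁(z))/(1-F₁(z)) ~ √2/√(1-z)`:
the ratio of the two expressions tends to `1`. -/
theorem stmt_5 :
    Filter.Tendsto
      (fun z : ℝ => (Gfun z * (1 + F1 z) / (1 - F1 z)) / (Real.sqrt 2 / Real.sqrt (1 - z)))
      (nhdsWithin 1 (Set.Iio 1)) (nhds 1) := by
  have hlim : Tendsto combRatio (𝓝[<] 1) (𝓝 1) :=
    (combRatio_one ▸ continuousAt_combRatio.tendsto).mono_left nhdsWithin_le_nhds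
  refine hlim.congr' ?_
  filter_upwards [Ioo_mem_nhdsLT zero_lt_one] with z hz
  exact (div_eq_combRatio hz.1 hz.2).symm
end

section
/- Let (E_n) and (B_n) be sequences of events on a probability space. Set E_n* = ∪_{j≥n} E_j and, for m ≤ n, B*_{n,m} = B_n ∩ B_{n-1}^c ∩ ... ∩ B_m^c (with B*_{n,n} = B_n). Suppose P(E_n infinitely often) = 0 and there exists C > 0 such that P(E_n* | B*_{n,m}) ≥ C for all large enough m ≤ n (whenever P(B*_{n,m}) > 0). Then P(B_n infinitely often) = 0. -/
open MeasureTheory Filter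

/-!
Decompose `⋃_{n ≥ m} Bₙ` into the disjoint first-entry events `B*_{n,m}`. On each of them `E*_m`
has conditional probability at least `C`, so `C · P(Bₙ i.o.) ≤ C · P(⋃_{n ≥ m} Bₙ) ≤ P(E*_m)`
for every large `m`, and `P(E*_m) → P(Eₙ i.o.) = 0`.
-/

theorem mul_measure_iUnion_le_of_forall_mul_le_inter {α ι : Type*} [MeasurableSpace α]
    [Countable ι] {μ : Measure α} {D : ι → Set α} (hD : ∀ i, MeasurableSet (D i))
    (hdisj : Pairwise (Function.onFun Disjoint D)) {F : Set α} (hF : MeasurableSet F)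
    {c : ENNReal} (h : ∀ i, c * μ (D i) ≤ μ (F ∩ D i)) :
    c * μ (⋃ i, D i) ≤ μ F :=
  calc c * μ (⋃ i, D i) = ∑' i, c * μ (D i) := by
        rw [measure_iUnion hdisj hD, ENNReal.tsum_mul_left]
    _ ≤ ∑' i, μ (F ∩ D i) := ENNReal.tsum_le_tsum h
    _ ≤ μ (⋃ i, F ∩ D i) := tsum_meas_le_meas_iUnion_of_disjoint μ (fun i => hF.inter (hD i))
        fun _ _ hij => (hdisj hij).mono Set.inter_subset_right Set.inter_subset_right
    _ ≤ μ F := measure_mono (Set.iUnion_subset fun _ => Set.inter_subset_left)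

theorem inter_iInter_Ico_compl_eq_disjointed {α : Type*} (B : ℕ → Set α) {m n : ℕ}
    (hmn : m ≤ n) :
    B n ∩ ⋂ k ∈ Set.Ico m n, (B k)ᶜ = disjointed (fun i => B (i + m)) (n - m) := by
  ext x
  simp only [disjointed_eq_inter_compl, Set.mem_inter_iff, Set.mem_iInter, Set.mem_compl_iff,
    Set.mem_Ico, Nat.sub_add_cancel hmn]
  refine and_congr_right fun _ => ⟨fun h j hj => h _ (by omega), fun h k hk => ?_⟩
  simpa [Nat.sub_add_cancel hk.1] using h (k - m) (by omega)

theorem limsup_subset_iUnion_add {α : Type*} (B : ℕ → Set α) (m : ℕ) :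
    limsup B atTop ⊆ ⋃ i, B (i + m) := by
  rw [limsup_eq_iInf_iSup_of_nat']
  exact Set.iInter_subset _ m

theorem mul_measure_limsup_le_of_forall_mul_le_inter_firstEntry {α : Type*}
    [MeasurableSpace α] {μ : Measure α} {B : ℕ → Set α} (hB : ∀ n, MeasurableSet (B n))
    {F : Set α} (hF : MeasurableSet F) {c : ENNReal} {m : ℕ}
    (h : ∀ n, m ≤ n → μ (B n ∩ ⋂ k ∈ Set.Ico m n, (B k)ᶜ) ≠ 0 →
      c * μ (B n ∩ ⋂ k ∈ Set.Ico m n, (B k)ᶜ) ≤ μ (F ∩ (B n ∩ ⋂ k ∈ Set.Ico m n, (B k)ᶜ))) :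
    c * μ (limsup B atTop) ≤ μ F := by
  refine (mul_le_mul_right (measure_mono (limsup_subset_iUnion_add B m)) c).trans ?_
  rw [← iUnion_disjointed]
  refine mul_measure_iUnion_le_of_forall_mul_le_inter
    (MeasurableSet.disjointed fun i => hB _) (disjoint_disjointed _) hF fun i => ?_
  have hD := inter_iInter_Ico_compl_eq_disjointed B (Nat.le_add_left m i)
  rw [Nat.add_sub_cancel] at hD
  rw [← hD]
  by_cases h0 : μ (B (i + m) ∩ ⋂ k ∈ Set.Ico m (i + m), (B k)ᶜ) = 0
  · rw [h0, mul_zero]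
    exact zero_le
  · exact h _ (Nat.le_add_left m i) h0

/-- Lemma 4.3: if `P(Eₙ i.o.) = 0` and `P(Eₙ* | B*_{n,m}) ≥ C > 0` for all large
`m ≤ n` (whenever `B*_{n,m}` has positive probability), then `P(Bₙ i.o.) = 0`.
Here `Eₙ* = ⋃_{j≥n} Eⱼ` and `B*_{n,m} = Bₙ ∩ Bₙ₋₁ᶜ ∩ ... ∩ Bₘᶜ`, and the
conditional bound is written in the equivalent form `P(Eₙ* ∩ B*_{n,m}) ≥ C·P(B*_{n,m})`. -/
theorem stmt_8 {Ω : Type*} [MeasurableSpace Ω] (P : Measure Ω) [IsProbabilityMeasure P]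
    (E B : ℕ → Set Ω) (hE : ∀ n, MeasurableSet (E n)) (hB : ∀ n, MeasurableSet (B n))
    (hEio : P (limsup E atTop) = 0)
    (C : ENNReal) (hC : 0 < C)
    (hcond : ∃ M : ℕ, ∀ m, M ≤ m → ∀ n, m ≤ n →
      P (B n ∩ ⋂ k ∈ Set.Ico m n, (B k)ᶜ) ≠ 0 →
        C * P (B n ∩ ⋂ k ∈ Set.Ico m n, (B k)ᶜ) ≤
          P ((⋃ j, ⋃ (_ : n ≤ j), E j) ∩ (B n ∩ ⋂ k ∈ Set.Ico m n, (B k)ᶜ))) :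
    P (limsup B atTop) = 0 := by
  obtain ⟨M, hM⟩ := hcond
  set Estar : ℕ → Set Ω := fun n => ⋃ j, ⋃ (_ : n ≤ j), E j
  have hEstar_meas (n : ℕ) : MeasurableSet (Estar n) :=
    MeasurableSet.iUnion fun j => MeasurableSet.iUnion fun _ => hE j
  have hEstar_anti : Antitone Estar := fun a b hab =>
    Set.biUnion_mono (fun _ (hj : b ≤ _) => hab.trans hj) fun _ _ => subset_rfl
  have hbound (m : ℕ) (hm : M ≤ m) : C * P (limsup B atTop) ≤ P (Estar m) :=
    mul_measure_limsup_le_of_forall_mul_le_inter_firstEntry hB (hEstar_meas m)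
      fun n hmn h0 => (hM m hm n hmn h0).trans
        (measure_mono (Set.inter_subset_inter_left _ (hEstar_anti hmn)))
  have htendsto : Tendsto (fun n => P (Estar n)) atTop (nhds 0) := by
    rw [← hEio, limsup_eq_iInf_iSup_of_nat]
    exact tendsto_measure_iInter_atTop (fun n => (hEstar_meas n).nullMeasurableSet) hEstar_anti
      ⟨0, measure_ne_top P _⟩
  have hle : C * P (limsup B atTop) ≤ 0 :=
    ge_of_tendsto htendsto (eventually_atTop.mpr ⟨M, hbound⟩)
  exact (mul_eq_zero.mp (nonpos_iff_eq_zero.mp hle)).resolve_left hC.ne'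
end
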